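/- Let Γ ⊂ ℝⁿ be d-Ahlfors regular with d < n−1 and complement Ω = ℝⁿ \ Γ. There exists C depending only on C_σ, n, d such that for every x ∈ Γ and r > 0 there is a corkscrew point A ∈ Ω with C⁻¹ r ≤ dist(A,Γ) ≤ |A − x| ≤ C r. -/

import Mathlib

open MeasureTheory Metric Set

noncomputable section

/-- `σ` is `d`-Ahlfors regular on `Γ` with constant `C`. -/
def AhlforsRegular {E : Type*} [NormedAddCommGroup E] [MeasurableSpace E]
    (σ : Measure E) (Γ : Set E) (d : ℝ) (C : ℝ) : Prop :=
  ∀ x ∈ Γ, ∀ r > 0, ENNReal.ofReal (C⁻¹ * r ^ d) ≤ σ (ball x r) ∧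
    σ (ball x r) ≤ ENNReal.ofReal (C * r ^ d)

/-! If every point of `B(x, r)` lay within `δ = r / M` of `Γ`, the `2δ`-balls around a maximal
`δ`-separated subset of `Γ ∩ B(x, 2r)` would cover `B(x, r)`, so by volume that subset has at least
`(M / 2)ⁿ` points; the disjoint `δ/2`-balls around it and Ahlfors regularity allow at most
`C² (5M)ᵈ` points. For `M = 2ⁿ C² 5ᵈ + 1` this gives `Mⁿ ≤ (M - 1) Mᵈ`, contradicting
`Mⁿ ≥ M · Mᵈ`, which holds because `n ≥ d + 1`. -/

open Module Finset
open scoped NNReal ENNReal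

theorem pow_finrank_le_card_mul_of_ball_subset_iUnion_closedBall {E : Type*}
    [NormedAddCommGroup E] [NormedSpace ℝ E] [FiniteDimensional ℝ E] {x : E} {r ρ : ℝ}
    (hr : 0 < r) (hρ : 0 ≤ ρ) {S : Finset E} (hS : ball x r ⊆ ⋃ b ∈ S, closedBall b ρ) :
    r ^ finrank ℝ E ≤ #S * ρ ^ finrank ℝ E := by
  borelize E
  let μ : Measure E := Measure.addHaar
  have hvol : ENNReal.ofReal (r ^ finrank ℝ E) * μ (ball 0 1) ≤
      #S * (ENNReal.ofReal (ρ ^ finrank ℝ E) * μ (ball 0 1)) :=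
    calc ENNReal.ofReal (r ^ finrank ℝ E) * μ (ball 0 1) = μ (ball x r) :=
          (μ.addHaar_ball_of_pos x hr).symm
      _ ≤ μ (⋃ b ∈ S, closedBall b ρ) := measure_mono hS
      _ ≤ ∑ b ∈ S, μ (closedBall b ρ) := measure_biUnion_finset_le _ _
      _ = #S * (ENNReal.ofReal (ρ ^ finrank ℝ E) * μ (ball 0 1)) := by
          simp [μ.addHaar_closedBall _ hρ]
  rwa [← mul_assoc, ENNReal.mul_le_mul_iff_left (measure_ball_pos μ 0 one_pos).ne'
    measure_ball_lt_top.ne, ← ENNReal.ofReal_natCast, ← ENNReal.ofReal_mul (by positivity),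
    ENNReal.ofReal_le_ofReal_iff (by positivity)] at hvol

section AhlforsRegular

variable {E : Type*} [NormedAddCommGroup E] [MeasurableSpace E] [OpensMeasurableSpace E]
  {σ : Measure E} {Γ : Set E} {d C : ℝ} {x : E} {R ρ : ℝ}

theorem AhlforsRegular.card_le_of_pairwiseDisjoint (h : AhlforsRegular σ Γ d C) (hC : 0 < C)
    (hx : x ∈ Γ) (hR : 0 ≤ R) (hρ : 0 < ρ) {S : Finset E} (hS : ↑S ⊆ Γ ∩ closedBall x R)
    (hdisj : (S : Set E).PairwiseDisjoint (ball · ρ)) :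
    (#S : ℝ) ≤ C ^ 2 * ((R + ρ) / ρ) ^ d := by
  have hcount : (#S : ℝ≥0∞) * ENNReal.ofReal (C⁻¹ * ρ ^ d) ≤ ENNReal.ofReal (C * (R + ρ) ^ d) :=
    calc (#S : ℝ≥0∞) * ENNReal.ofReal (C⁻¹ * ρ ^ d)
        = #S • ENNReal.ofReal (C⁻¹ * ρ ^ d) := (nsmul_eq_mul _ _).symm
      _ ≤ ∑ b ∈ S, σ (ball b ρ) :=
          card_nsmul_le_sum _ _ _ fun b hb => (h b (hS hb).1 ρ hρ).1
      _ = σ (⋃ b ∈ S, ball b ρ) :=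
          (measure_biUnion_finset hdisj fun _ _ => measurableSet_ball).symm
      _ ≤ σ (ball x (R + ρ)) := measure_mono <| iUnion₂_subset fun b hb =>
          ball_subset_ball' (by linarith [mem_closedBall.1 (hS hb).2])
      _ ≤ ENNReal.ofReal (C * (R + ρ) ^ d) := (h x hx (R + ρ) (by positivity)).2
  rw [← ENNReal.ofReal_natCast, ← ENNReal.ofReal_mul (by positivity),
    ENNReal.ofReal_le_ofReal_iff (by positivity)] at hcount
  have hρd : 0 < ρ ^ d := Real.rpow_pos_of_pos hρ d
  rw [Real.div_rpow (by positivity) hρ.le, mul_div_assoc', le_div_iff₀ hρd]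
  calc (#S : ℝ) * ρ ^ d = C * (#S * (C⁻¹ * ρ ^ d)) := by field_simp
    _ ≤ C * (C * (R + ρ) ^ d) := by gcongr
    _ = C ^ 2 * (R + ρ) ^ d := by ring

theorem AhlforsRegular.encard_le_of_isSeparated (h : AhlforsRegular σ Γ d C) (hC : 0 < C)
    (hx : x ∈ Γ) (hR : 0 ≤ R) (hρ : 0 < ρ) {S : Set E} (hS : S ⊆ Γ ∩ closedBall x R)
    (hsep : IsSeparated (ENNReal.ofReal (2 * ρ)) S) :
    S.encard ≤ ⌊C ^ 2 * ((R + ρ) / ρ) ^ d⌋₊ := by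
  have hfinset : ∀ T : Finset E, ↑T ⊆ S → #T ≤ ⌊C ^ 2 * ((R + ρ) / ρ) ^ d⌋₊ := fun T hT =>
    Nat.le_floor <| h.card_le_of_pairwiseDisjoint hC hx hR hρ (hT.trans hS)
      fun b hb b' hb' hbb' => ball_disjoint_ball <| by
        have hlt : ENNReal.ofReal (2 * ρ) < edist b b' := hsep (hT hb) (hT hb') hbb'
        rw [edist_dist, ENNReal.ofReal_lt_ofReal_iff_of_nonneg (by positivity)] at hlt
        linarith
  have hfin : S.Finite := Set.not_infinite.1 fun hinf => by
    obtain ⟨T, hT, hcard⟩ := hinf.exists_subset_card_eq (⌊C ^ 2 * ((R + ρ) / ρ) ^ d⌋₊ + 1)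
    have := hfinset T hT
    omega
  obtain ⟨T, rfl⟩ := hfin.exists_finset_coe
  rw [Set.encard_coe_eq_coe_finsetCard]
  exact_mod_cast hfinset T le_rfl

theorem AhlforsRegular.exists_finset_subset_iUnion_closedBall (h : AhlforsRegular σ Γ d C)
    (hC : 0 < C) (hx : x ∈ Γ) (hR : 0 ≤ R) (hρ : 0 < ρ) :
    ∃ S : Finset E, Γ ∩ closedBall x R ⊆ ⋃ b ∈ S, closedBall b (2 * ρ) ∧
      (#S : ℝ) ≤ C ^ 2 * ((R + ρ) / ρ) ^ d := by
  set N := ⌊C ^ 2 * ((R + ρ) / ρ) ^ d⌋₊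
  set ε := (2 * ρ).toNNReal
  have hsep : ∀ S ⊆ Γ ∩ closedBall x R, IsSeparated ε S → S.encard ≤ N :=
    fun S hS hsep => h.encard_le_of_isSeparated hC hx hR hρ hS hsep
  have hpack : packingNumber ε (Γ ∩ closedBall x R) ≠ ⊤ :=
    ne_top_of_le_ne_top (ENat.natCast_ne_top N) <| iSup₂_le fun S hS => iSup_le (hsep S hS)
  obtain ⟨hfin, hcard⟩ := Set.encard_le_coe_iff_finite_ncard_le.1 <|
    hsep _ maximalSeparatedSet_subset isSeparated_maximalSeparatedSet
  obtain ⟨S, hS⟩ := hfin.exists_finset_coe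
  refine ⟨S, ?_, ?_⟩
  · have hcover := isCover_iff_subset_iUnion_closedBall.1 (isCover_maximalSeparatedSet hpack)
    rwa [← hS, Real.coe_toNNReal _ (by positivity)] at hcover
  · rw [← hS, Set.ncard_coe_finset] at hcard
    exact (Nat.cast_le.2 hcard).trans (Nat.floor_le (by positivity))

def corkscrewConstant (n : ℕ) (d C : ℝ) : ℝ := 2 ^ n * C ^ 2 * 5 ^ d + 1

theorem one_le_corkscrewConstant (n : ℕ) (d C : ℝ) : 1 ≤ corkscrewConstant n d C := by
  unfold corkscrewConstant
  linarith [show 0 ≤ 2 ^ n * C ^ 2 * 5 ^ d by positivity]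

theorem AhlforsRegular.exists_mem_ball_div_corkscrewConstant_le_infDist [NormedSpace ℝ E]
    [FiniteDimensional ℝ E] (h : AhlforsRegular σ Γ d C) (hC : 0 < C) (hd : 0 ≤ d)
    (hdn : d + 1 ≤ finrank ℝ E) (hx : x ∈ Γ) {r : ℝ} (hr : 0 < r) :
    ∃ A ∈ ball x r, r / corkscrewConstant (finrank ℝ E) d C ≤ infDist A Γ := by
  set n := finrank ℝ E
  set M := corkscrewConstant n d C with hM_def
  have hM : 1 ≤ M := one_le_corkscrewConstant n d C
  set δ := r / M
  have hδ : 0 < δ := by positivity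
  have hδr : δ ≤ r := div_le_self hr.le hM
  by_contra! hnear
  obtain ⟨S, hcover, hcard⟩ :=
    h.exists_finset_subset_iUnion_closedBall hC hx (R := 2 * r) (by positivity) (half_pos hδ)
  have hball : ball x r ⊆ ⋃ b ∈ S, closedBall b (2 * δ) := by
    intro A hA
    obtain ⟨y, hyΓ, hAy⟩ := (infDist_lt_iff ⟨x, hx⟩).1 (hnear A hA)
    have hyx : y ∈ closedBall x (2 * r) :=
      mem_closedBall.2 (by linarith [dist_triangle_left y x A, mem_ball.1 hA])
    obtain ⟨b, hb, hyb⟩ := mem_iUnion₂.1 (hcover ⟨hyΓ, hyx⟩)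
    refine mem_iUnion₂.2 ⟨b, hb, mem_closedBall.2 ?_⟩
    linarith [dist_triangle A y b, mem_closedBall.1 hyb]
  have hvol := pow_finrank_le_card_mul_of_ball_subset_iUnion_closedBall hr (by positivity) hball
  have hcard' : (#S : ℝ) ≤ C ^ 2 * 5 ^ d * M ^ d := by
    calc (#S : ℝ) ≤ C ^ 2 * ((2 * r + δ / 2) / (δ / 2)) ^ d := hcard
      _ ≤ C ^ 2 * (5 * M) ^ d := by
        gcongr
        rw [div_le_iff₀ (half_pos hδ)]
        simp only [δ]
        field_simp
        linarith
      _ = C ^ 2 * 5 ^ d * M ^ d := by rw [Real.mul_rpow (by norm_num) (by linarith)]; ring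
  have hMn_le : M ^ n ≤ (M - 1) * M ^ d := by
    have hcount : r ^ n * M ^ n ≤ r ^ n * (2 ^ n * #S) :=
      calc r ^ n * M ^ n ≤ #S * (2 * δ) ^ n * M ^ n :=
          mul_le_mul_of_nonneg_right hvol (by positivity)
        _ = r ^ n * (2 ^ n * #S) := by
          rw [← div_mul_cancel₀ r (show M ≠ 0 by positivity)]
          ring
    have hM_sub : M - 1 = 2 ^ n * C ^ 2 * 5 ^ d := by simp [hM_def, corkscrewConstant]
    calc M ^ n ≤ 2 ^ n * #S := le_of_mul_le_mul_left hcount (by positivity)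
      _ ≤ 2 ^ n * (C ^ 2 * 5 ^ d * M ^ d) := by gcongr
      _ = (M - 1) * M ^ d := by rw [hM_sub]; ring
  have hMd : 0 < M ^ d := by positivity
  have hMn_ge : M * M ^ d ≤ M ^ n := by
    calc M * M ^ d = M ^ (d + 1) := by rw [Real.rpow_add_one (by positivity), mul_comm]
      _ ≤ M ^ (n : ℝ) := Real.rpow_le_rpow_of_exponent_le hM hdn
      _ = M ^ n := Real.rpow_natCast M n
  linarith

end AhlforsRegular

theorem stmt2 (n : ℕ) (d : ℝ) (hd : 0 < d) (hdn : d < (n : ℝ) - 1)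
    (Γ : Set (EuclideanSpace ℝ (Fin n)))
    (σ : Measure (EuclideanSpace ℝ (Fin n)))
    (Cσ : ℝ) (hCσ : 1 ≤ Cσ) (hAR : AhlforsRegular σ Γ d Cσ) :
    ∃ C > 0, ∀ x ∈ Γ, ∀ r > 0, ∃ A ∉ Γ,
      C⁻¹ * r ≤ infDist A Γ ∧ infDist A Γ ≤ ‖A - x‖ ∧ ‖A - x‖ ≤ C * r := by
  have hM := one_le_corkscrewConstant n d Cσ
  refine ⟨corkscrewConstant n d Cσ, by linarith, fun x hx r hr => ?_⟩
  obtain ⟨A, hAx, hA⟩ := hAR.exists_mem_ball_div_corkscrewConstant_le_infDist (by linarith)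
    hd.le (by rw [finrank_euclideanSpace_fin]; linarith) hx hr
  rw [finrank_euclideanSpace_fin, ← inv_mul_eq_div] at hA
  have hA_pos : 0 < infDist A Γ := hA.trans_lt' (by positivity)
  refine ⟨A, fun hAΓ => hA_pos.ne' (infDist_zero_of_mem hAΓ), hA, ?_, ?_⟩
  · rw [← dist_eq_norm]
    exact infDist_le_dist_of_mem hx
  · rw [← dist_eq_norm]
    nlinarith [mem_ball.1 hAx]
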